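/- Let K be a compact topological group and S₀, S₁ ⊆ K nonempty closed subsets with S₀ ⊆ S₁ and S₁ ⊆ k⁻¹ · S₀ for some k ∈ K. Then S₀ = S₁. -/

import Mathlib

open Pointwise Filter

/-!
Since `k • S₁ ⊆ S₀ ⊆ S₁`, the closed set `S₁` is mapped into itself by `k`. In a compact group
`k⁻¹` is a cluster point of the powers `kⁿ`, so `k⁻¹ • S₁` lies in the closure of `S₁`, which is
`S₁`; hence `k • S₁ = S₁ ⊆ S₀`.
-/

theorem Set.pow_smul_set_subset_of_smul_set_subset {M α : Type*} [Monoid M] [MulAction M α]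
    {k : M} {S : Set α} (h : k • S ⊆ S) (n : ℕ) : k ^ n • S ⊆ S := by
  induction n with
  | zero => simp
  | succ n ih =>
    rw [pow_succ', mul_smul]
    exact (Set.smul_set_mono ih).trans h

theorem IsClosed.smul_set_eq_of_smul_set_subset {K : Type*} [Group K] [TopologicalSpace K]
    [IsTopologicalGroup K] [CompactSpace K] {S : Set K} (hS : IsClosed S) {k : K}
    (h : k • S ⊆ S) : k • S = S := by
  refine h.antisymm fun x hx ↦ ?_
  have hcluster : MapClusterPt (k⁻¹ * x) atTop (fun n : ℕ ↦ k ^ n * x) := by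
    simpa [Function.comp_def] using
      (mapClusterPt_self_zpow_atTop_pow k (-1)).continuousAt_comp
        (continuous_mul_const x).continuousAt
  have hmem : ∀ n : ℕ, k ^ n * x ∈ S := fun n ↦
    Set.pow_smul_set_subset_of_smul_set_subset h n (Set.smul_mem_smul_set hx)
  rw [Set.mem_smul_set_iff_inv_smul_mem, smul_eq_mul]
  exact hS.mem_of_mapClusterPt hcluster (Eventually.of_forall hmem)

theorem stmt_1_general {K : Type*} [Group K] [TopologicalSpace K] [IsTopologicalGroup K]
    [CompactSpace K] (S₀ S₁ : Set K)
    (h₁c : IsClosed S₁)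
    (k : K) (h01 : S₀ ⊆ S₁) (h1k : S₁ ⊆ k⁻¹ • S₀) : S₀ = S₁ := by
  have hkS₁ : k • S₁ ⊆ S₀ := Set.smul_set_subset_iff_subset_inv_smul_set.2 h1k
  have hinv : k • S₁ = S₁ := h₁c.smul_set_eq_of_smul_set_subset (hkS₁.trans h01)
  exact h01.antisymm (hinv ▸ hkS₁)

/-- Sandwich argument in a compact topological group: if `S₀ ⊆ S₁ ⊆ k⁻¹ • S₀`
for nonempty closed subsets `S₀, S₁`, then `S₀ = S₁`. -/
theorem stmt_1 {K : Type*} [Group K] [TopologicalSpace K] [IsTopologicalGroup K]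
    [CompactSpace K] [T2Space K] (S₀ S₁ : Set K)
    (h₀c : IsClosed S₀) (h₁c : IsClosed S₁)
    (h₀ne : S₀.Nonempty) (h₁ne : S₁.Nonempty)
    (k : K) (h01 : S₀ ⊆ S₁) (h1k : S₁ ⊆ k⁻¹ • S₀) : S₀ = S₁ :=
  stmt_1_general S₀ S₁ h₁c k h01 h1k
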